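/- Properties of the stream function for odd nonnegative data (Lemma on G): Let g : [−π/4,π/4] → ℝ be continuous and odd with g ≥ 0 on [0,π/4], and let G be the unique odd C² function on [−π/4,π/4] satisfying G'' + 4G = g and G(±π/4) = 0. Then: (1) G ≤ 0 on [0,π/4]; (2) G'' ≥ g on [0,π/4]; (3) for all θ ∈ [0,π/4], G'(θ) = sin(2θ) ∫₀^θ g(θ') sin(2θ') dθ' − cos(2θ) ∫_θ^{π/4} g(θ') cos(2θ') dθ'. -/

import Mathlib

/-!
Since `sin 2θ` and `cos 2θ` solve the homogeneous equation `u'' + 4u = 0`, the Wronskians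
`S = sin 2θ · G' - 2 cos 2θ · G` and `C = cos 2θ · G' + 2 sin 2θ · G` have derivatives
`g sin 2θ` and `g cos 2θ`. Oddness gives `S 0 = 0` and the boundary condition gives `C (π/4) = 0`,
so `∫₀^θ g sin 2θ' = S θ ≥ 0` and `∫_θ^{π/4} g cos 2θ' = -C θ ≥ 0` on `[0, π/4]`. Solving back,
`2G = sin 2θ · C - cos 2θ · S ≤ 0` and `G' = sin 2θ · S + cos 2θ · C`; then `G'' = g - 4G ≥ g`.
-/

open Set Real intervalIntegral
open scoped Real

noncomputable section

def I14 : Set ℝ := Icc (-(π/4)) (π/4)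

def wronskian (u u' v v' : ℝ → ℝ) (t : ℝ) : ℝ := u t * v' t - u' t * v t

theorem hasDerivAt_wronskian {u u' v v' : ℝ → ℝ} {u'' v'' x : ℝ}
    (hu : HasDerivAt u (u' x) x) (hu' : HasDerivAt u' u'' x)
    (hv : HasDerivAt v (v' x) x) (hv' : HasDerivAt v' v'' x) :
    HasDerivAt (wronskian u u' v v') (u x * v'' - u'' * v x) x :=
  ((hu.mul hv').sub (hu'.mul hv)).congr_deriv (by ring)

theorem DifferentiableOn.hasDerivAt_of_mem_Ioo {v : ℝ → ℝ} {a b x : ℝ}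
    (hv : DifferentiableOn ℝ v (Icc a b)) (hx : x ∈ Ioo a b) :
    HasDerivAt v (derivWithin v (Icc a b) x) x :=
  (hv x (Ioo_subset_Icc_self hx)).hasDerivWithinAt.hasDerivAt (Icc_mem_nhds hx.1 hx.2)

theorem ContDiffOn.hasDerivAt_derivWithin_of_mem_Ioo {v : ℝ → ℝ} {a b x : ℝ}
    (hv : ContDiffOn ℝ 2 v (Icc a b)) (hx : x ∈ Ioo a b) :
    HasDerivAt (derivWithin v (Icc a b)) (iteratedDerivWithin 2 v (Icc a b) x) x := by
  have hab : a < b := hx.1.trans hx.2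
  have hv' : ContDiffOn ℝ 1 (derivWithin v (Icc a b)) (Icc a b) :=
    hv.derivWithin (uniqueDiffOn_Icc hab) (by norm_num)
  rw [iteratedDerivWithin_succ, iteratedDerivWithin_one]
  exact (hv'.differentiableOn one_ne_zero).hasDerivAt_of_mem_Ioo hx

theorem integral_mul_eq_wronskian_sub {u u' v f : ℝ → ℝ} {ω a b x y : ℝ}
    (hu : ∀ t, HasDerivAt u (u' t) t) (hu' : ∀ t, HasDerivAt u' (-(ω ^ 2 * u t)) t)
    (hv : ContDiffOn ℝ 2 v (Icc a b))
    (hf : ∀ t ∈ Icc a b, iteratedDerivWithin 2 v (Icc a b) t + ω ^ 2 * v t = f t)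
    (hax : a ≤ x) (hxy : x ≤ y) (hyb : y ≤ b) :
    ∫ t in x..y, f t * u t =
      wronskian u u' v (derivWithin v (Icc a b)) y -
        wronskian u u' v (derivWithin v (Icc a b)) x := by
  have hxyab : Icc x y ⊆ Icc a b := Icc_subset_Icc hax hyb
  have hIoo : Ioo x y ⊆ Ioo a b := Ioo_subset_Ioo hax hyb
  rcases hxy.eq_or_lt with rfl | hlt
  · simp
  have hab : a < b := (hax.trans_lt hlt).trans_le hyb
  have hu_cont : Continuous u := continuous_iff_continuousAt.2 fun t => (hu t).continuousAt
  have hu'_cont : Continuous u' := continuous_iff_continuousAt.2 fun t => (hu' t).continuousAt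
  have hf_cont : ContinuousOn f (Icc a b) :=
    ((hv.continuousOn_iteratedDerivWithin le_rfl (uniqueDiffOn_Icc hab)).add
      (continuousOn_const.mul hv.continuousOn)).congr fun t ht => (hf t ht).symm
  have hW_cont : ContinuousOn (wronskian u u' v (derivWithin v (Icc a b))) (Icc a b) :=
    (hu_cont.continuousOn.mul (hv.continuousOn_derivWithin (uniqueDiffOn_Icc hab) one_le_two)).sub
      (hu'_cont.continuousOn.mul hv.continuousOn)
  refine integral_eq_sub_of_hasDerivAt_of_le (f' := fun t => f t * u t) hxy (hW_cont.mono hxyab)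
    (fun t ht => ?_)
    (ContinuousOn.intervalIntegrable_of_Icc hxy ((hf_cont.mono hxyab).mul hu_cont.continuousOn))
  rw [← hf t (Ioo_subset_Icc_self (hIoo ht))]
  exact (hasDerivAt_wronskian (hu t) (hu' t)
    ((hv.differentiableOn two_ne_zero).hasDerivAt_of_mem_Ioo (hIoo ht))
    (hv.hasDerivAt_derivWithin_of_mem_Ioo (hIoo ht))).congr_deriv (by ring)

theorem hasDerivAt_sin_mul (ω t : ℝ) :
    HasDerivAt (fun s => sin (ω * s)) (ω * cos (ω * t)) t := by
  simpa [mul_comm] using ((hasDerivAt_id t).const_mul ω).sin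

theorem hasDerivAt_cos_mul (ω t : ℝ) :
    HasDerivAt (fun s => cos (ω * s)) (-(ω * sin (ω * t))) t := by
  simpa [mul_comm] using ((hasDerivAt_id t).const_mul ω).cos

theorem hasDerivAt_const_mul_cos_mul (ω t : ℝ) :
    HasDerivAt (fun s => ω * cos (ω * s)) (-(ω ^ 2 * sin (ω * t))) t :=
  ((hasDerivAt_cos_mul ω t).const_mul ω).congr_deriv (by ring)

theorem hasDerivAt_neg_const_mul_sin_mul (ω t : ℝ) :
    HasDerivAt (fun s => -(ω * sin (ω * s))) (-(ω ^ 2 * cos (ω * t))) t :=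
  ((hasDerivAt_sin_mul ω t).const_mul ω).neg.congr_deriv (by ring)

theorem sin_mul_wronskian_add_cos_mul_wronskian (ω : ℝ) (v v' : ℝ → ℝ) (t : ℝ) :
    sin (ω * t) * wronskian (fun s => sin (ω * s)) (fun s => ω * cos (ω * s)) v v' t +
      cos (ω * t) * wronskian (fun s => cos (ω * s)) (fun s => -(ω * sin (ω * s))) v v' t =
      v' t := by
  simp only [wronskian]
  linear_combination v' t * sin_sq_add_cos_sq (ω * t)

theorem sin_mul_wronskian_sub_cos_mul_wronskian (ω : ℝ) (v v' : ℝ → ℝ) (t : ℝ) :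
    sin (ω * t) * wronskian (fun s => cos (ω * s)) (fun s => -(ω * sin (ω * s))) v v' t -
      cos (ω * t) * wronskian (fun s => sin (ω * s)) (fun s => ω * cos (ω * s)) v v' t =
      ω * v t := by
  simp only [wronskian]
  linear_combination ω * v t * sin_sq_add_cos_sq (ω * t)

theorem sin_two_mul_nonneg_of_mem_Icc {t : ℝ} (ht : t ∈ Icc 0 (π / 4)) : 0 ≤ sin (2 * t) :=
  sin_nonneg_of_nonneg_of_le_pi (by linarith [ht.1]) (by linarith [ht.2, pi_pos])

theorem cos_two_mul_nonneg_of_mem_Icc {t : ℝ} (ht : t ∈ Icc 0 (π / 4)) : 0 ≤ cos (2 * t) :=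
  cos_nonneg_of_mem_Icc ⟨by linarith [ht.1, pi_pos], by linarith [ht.2]⟩

theorem integral_mul_sin_mul_eq_wronskian {v f : ℝ → ℝ} {ω a b θ : ℝ}
    (hv : ContDiffOn ℝ 2 v (Icc a b))
    (hf : ∀ t ∈ Icc a b, iteratedDerivWithin 2 v (Icc a b) t + ω ^ 2 * v t = f t)
    (hv0 : v 0 = 0) (ha : a ≤ 0) (hθ : θ ∈ Icc 0 b) :
    ∫ t in (0:ℝ)..θ, f t * sin (ω * t) =
      wronskian (fun s => sin (ω * s)) (fun s => ω * cos (ω * s)) v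
        (derivWithin v (Icc a b)) θ := by
  rw [integral_mul_eq_wronskian_sub (hasDerivAt_sin_mul ω) (hasDerivAt_const_mul_cos_mul ω) hv hf
    ha hθ.1 hθ.2]
  simp [wronskian, hv0]

theorem integral_mul_cos_mul_eq_neg_wronskian {v f : ℝ → ℝ} {ω a b θ : ℝ}
    (hv : ContDiffOn ℝ 2 v (Icc a b))
    (hf : ∀ t ∈ Icc a b, iteratedDerivWithin 2 v (Icc a b) t + ω ^ 2 * v t = f t)
    (hvb : v b = 0) (hωb : cos (ω * b) = 0) (hθ : θ ∈ Icc a b) :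
    ∫ t in θ..b, f t * cos (ω * t) =
      -wronskian (fun s => cos (ω * s)) (fun s => -(ω * sin (ω * s))) v
        (derivWithin v (Icc a b)) θ := by
  rw [integral_mul_eq_wronskian_sub (hasDerivAt_cos_mul ω) (hasDerivAt_neg_const_mul_sin_mul ω) hv
    hf hθ.1 hθ.2 le_rfl]
  simp [wronskian, hvb, hωb]

theorem intervalIntegral_mul_nonneg {f u : ℝ → ℝ} {a b x y : ℝ} (hax : a ≤ x) (hxy : x ≤ y)
    (hyb : y ≤ b) (hf : ∀ t ∈ Icc a b, 0 ≤ f t) (hu : ∀ t ∈ Icc a b, 0 ≤ u t) :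
    0 ≤ ∫ t in x..y, f t * u t :=
  intervalIntegral.integral_nonneg hxy fun t ht =>
    have ht' : t ∈ Icc a b := ⟨hax.trans ht.1, ht.2.trans hyb⟩
    mul_nonneg (hf t ht') (hu t ht')

theorem stream_function_properties_general
    (g G : ℝ → ℝ)
    (hgpos : ∀ θ ∈ Icc (0:ℝ) (π/4), 0 ≤ g θ)
    (hGodd : ∀ θ ∈ I14, G (-θ) = - G θ)
    (hGC2 : ContDiffOn ℝ 2 G I14)
    (hGeq : ∀ θ ∈ I14, iteratedDerivWithin 2 G I14 θ + 4 * G θ = g θ)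
    (hbc₁ : G (π/4) = 0) :
    (∀ θ ∈ Icc (0:ℝ) (π/4), G θ ≤ 0) ∧
    (∀ θ ∈ Icc (0:ℝ) (π/4), g θ ≤ iteratedDerivWithin 2 G I14 θ) ∧
    (∀ θ ∈ Icc (0:ℝ) (π/4),
      derivWithin G I14 θ =
        Real.sin (2*θ) * (∫ θ' in (0:ℝ)..θ, g θ' * Real.sin (2*θ')) -
          Real.cos (2*θ) * (∫ θ' in θ..(π/4), g θ' * Real.cos (2*θ'))) := by
  have hπ : 0 < π / 4 := by positivity
  unfold I14 at hGodd hGC2 hGeq ⊢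
  set I := Icc (-(π / 4)) (π / 4)
  have hsub : Icc 0 (π / 4) ⊆ I := Icc_subset_Icc_left (by linarith)
  have hGeq' : ∀ θ ∈ I, iteratedDerivWithin 2 G I θ + 2 ^ 2 * G θ = g θ := fun θ hθ => by
    rw [← hGeq θ hθ]; norm_num
  have hG0 : G 0 = 0 := by
    have h := hGodd 0 (hsub ⟨le_rfl, hπ.le⟩)
    rw [neg_zero] at h
    linarith
  have hcos : cos (2 * (π / 4)) = 0 := by rw [show 2 * (π / 4) = π / 2 by ring, cos_pi_div_two]
  have hA θ (hθ : θ ∈ Icc 0 (π / 4)) :=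
    integral_mul_sin_mul_eq_wronskian hGC2 hGeq' hG0 (by linarith) hθ
  have hB θ (hθ : θ ∈ Icc 0 (π / 4)) :=
    integral_mul_cos_mul_eq_neg_wronskian hGC2 hGeq' hbc₁ hcos (hsub hθ)
  have hG_nonpos : ∀ θ ∈ Icc 0 (π / 4), G θ ≤ 0 := fun θ hθ => by
    have h2G := sin_mul_wronskian_sub_cos_mul_wronskian 2 G (derivWithin G I) θ
    have hA_nonneg := (hA θ hθ) ▸ intervalIntegral_mul_nonneg le_rfl hθ.1 hθ.2 hgpos
      fun t => sin_two_mul_nonneg_of_mem_Icc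
    have hB_nonneg := (hB θ hθ) ▸ intervalIntegral_mul_nonneg hθ.1 hθ.2 le_rfl hgpos
      fun t => cos_two_mul_nonneg_of_mem_Icc
    nlinarith [mul_nonneg (sin_two_mul_nonneg_of_mem_Icc hθ) hB_nonneg,
      mul_nonneg (cos_two_mul_nonneg_of_mem_Icc hθ) hA_nonneg]
  refine ⟨hG_nonpos, fun θ hθ => by linarith [hGeq θ (hsub hθ), hG_nonpos θ hθ], fun θ hθ => ?_⟩
  rw [hA θ hθ, hB θ hθ, ← sin_mul_wronskian_add_cos_mul_wronskian 2 G (derivWithin G I) θ]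
  ring

/-- **Properties of the stream function for odd nonnegative data (Lemma 4.2).** If `g` is
continuous, odd, and nonnegative on `[0,π/4]`, and `G` is the unique odd `C²` solution of
`G'' + 4G = g`, `G(±π/4) = 0`, then on `[0,π/4]`: (1) `G ≤ 0`; (2) `G'' ≥ g`; and (3)
`G'(θ) = sin(2θ) ∫₀^θ g sin(2θ')dθ' - cos(2θ) ∫_θ^{π/4} g cos(2θ')dθ'`. -/
theorem stream_function_properties
    (g G : ℝ → ℝ)
    (hg : ContinuousOn g I14)
    (hgodd : ∀ θ ∈ I14, g (-θ) = - g θ)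
    (hgpos : ∀ θ ∈ Icc (0:ℝ) (π/4), 0 ≤ g θ)
    (hGodd : ∀ θ ∈ I14, G (-θ) = - G θ)
    (hGC2 : ContDiffOn ℝ 2 G I14)
    (hGeq : ∀ θ ∈ I14, iteratedDerivWithin 2 G I14 θ + 4 * G θ = g θ)
    (hbc₁ : G (π/4) = 0) (hbc₂ : G (-(π/4)) = 0) :
    (∀ θ ∈ Icc (0:ℝ) (π/4), G θ ≤ 0) ∧
    (∀ θ ∈ Icc (0:ℝ) (π/4), g θ ≤ iteratedDerivWithin 2 G I14 θ) ∧
    (∀ θ ∈ Icc (0:ℝ) (π/4),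
      derivWithin G I14 θ =
        Real.sin (2*θ) * (∫ θ' in (0:ℝ)..θ, g θ' * Real.sin (2*θ')) -
          Real.cos (2*θ) * (∫ θ' in θ..(π/4), g θ' * Real.cos (2*θ'))) :=
  stream_function_properties_general g G hgpos hGodd hGC2 hGeq hbc₁
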